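/- arXiv:1412.8193 — 2 statements merged into one kernel-verified Lean document; each statement's English description precedes it below -/
import Mathlib

section
/- The kernel of the homomorphism Θ: S₄ → GL(3,ℤ) (defined by Θ(σ₁)=Θ(σ₃)=[[-1,0,0],[0,0,-1],[0,-1,0]], Θ(σ₂)=[[0,0,-1],[0,-1,0],[-1,0,0]]) is the Klein four-group {id, (12)(34), (13)(24), (14)(23)}, generated by (12)(34) and (13)(24). -/
/-! Since `Θ σ₁ = Θ σ₃` and `σ₁² = 1`, the double transposition `σ₁σ₃ = (12)(34)` lies in the
kernel, and so do its conjugates `(13)(24)` and `(14)(23)`. Conversely the image contains the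
element `Θ σ₁ ≠ 1` of order 2 and the element `Θ (σ₁σ₂) ≠ 1` of order 3, so `6` divides the order
of the image and the kernel has at most `24 / 6 = 4` elements. -/

open Equiv

namespace MonoidHom

variable {G H : Type*} [Group G] [Group H]

theorem prime_dvd_natCard_range (f : G →* H) {p : ℕ} [Fact p.Prime] {g : G}
    (hg : g ^ p = 1) (hfg : f g ≠ 1) : p ∣ Nat.card f.range := by
  have hord : orderOf (f g) = p := orderOf_eq_prime (by rw [← map_pow, hg, map_one]) hfg
  rw [← hord, ← Subgroup.orderOf_mk (H := f.range) (f g) ⟨g, rfl⟩]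
  exact orderOf_dvd_natCard _

theorem natCard_ker_mul_dvd_of_dvd_natCard_range (f : G →* H) {m : ℕ}
    (hm : m ∣ Nat.card f.range) : Nat.card f.ker * m ∣ Nat.card G := by
  rw [← Subgroup.card_mul_index f.ker, Subgroup.index_ker]
  exact mul_dvd_mul_left _ hm

end MonoidHom

theorem Matrix.GeneralLinearGroup.ne_one_of_apply_self_ne_one {n R : Type*} [Fintype n]
    [DecidableEq n] [Semiring R] {A : GL n R} {i : n} (h : (A : Matrix n n R) i i ≠ 1) :
    A ≠ 1 := by
  rintro rfl
  simp at h

theorem Equiv.Perm.eq_kleinFour_of_natCard_le {K : Subgroup (Perm (Fin 4))}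
    (hx : swap 0 1 * swap 2 3 ∈ K) (hy : swap 0 2 * swap 1 3 ∈ K) (hK : Nat.card K ≤ 4) :
    (K : Set (Perm (Fin 4))) = {1, swap 0 1 * swap 2 3, swap 0 2 * swap 1 3, swap 0 3 * swap 1 2}
      ∧ K = Subgroup.closure {swap 0 1 * swap 2 3, swap 0 2 * swap 1 3} := by
  have hz : swap (0 : Fin 4) 3 * swap 1 2 = (swap 0 1 * swap 2 3) * (swap 0 2 * swap 1 3) := by
    decide
  have hK_set : (K : Set (Perm (Fin 4)))
      = {1, swap 0 1 * swap 2 3, swap 0 2 * swap 1 3, swap 0 3 * swap 1 2} := by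
    refine (Set.eq_of_subset_of_ncard_le ?_ ?_).symm
    · rintro g (rfl | rfl | rfl | rfl)
      exacts [one_mem _, hx, hy, hz ▸ mul_mem hx hy]
    · rw [← Nat.card_coe_set_eq]
      refine hK.trans (le_of_eq ?_)
      rw [Set.ncard_eq_toFinset_card']
      decide
  refine ⟨hK_set, le_antisymm ?_ ?_⟩
  · intro g hg
    rw [← SetLike.mem_coe, hK_set] at hg
    have hx' := Subgroup.subset_closure (Set.mem_insert (swap (0 : Fin 4) 1 * swap 2 3)
      {swap 0 2 * swap 1 3})
    have hy' := Subgroup.subset_closure (Set.mem_insert_of_mem (swap (0 : Fin 4) 1 * swap 2 3)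
      (Set.mem_singleton (swap 0 2 * swap 1 3)))
    rcases hg with rfl | rfl | rfl | rfl
    exacts [one_mem _, hx', hy', hz ▸ mul_mem hx' hy']
  · rw [Subgroup.closure_le]
    rintro g (rfl | rfl)
    exacts [hx, hy]

theorem stmt2 (Θ : Equiv.Perm (Fin 4) →* GL (Fin 3) ℤ)
    (h1 : (Θ (Equiv.swap 0 1) : Matrix (Fin 3) (Fin 3) ℤ)
        = !![-1, 0, 0; 0, 0, -1; 0, -1, 0])
    (h3 : (Θ (Equiv.swap 2 3) : Matrix (Fin 3) (Fin 3) ℤ)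
        = !![-1, 0, 0; 0, 0, -1; 0, -1, 0])
    (h2 : (Θ (Equiv.swap 1 2) : Matrix (Fin 3) (Fin 3) ℤ)
        = !![0, 0, -1; 0, -1, 0; -1, 0, 0]) :
    (Θ.ker : Set (Equiv.Perm (Fin 4)))
        = {1, Equiv.swap 0 1 * Equiv.swap 2 3,
            Equiv.swap 0 2 * Equiv.swap 1 3,
            Equiv.swap 0 3 * Equiv.swap 1 2} ∧
    Θ.ker = Subgroup.closure
        {Equiv.swap 0 1 * Equiv.swap 2 3, Equiv.swap 0 2 * Equiv.swap 1 3} := by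
  have hx : swap 0 1 * swap 2 3 ∈ Θ.ker := by
    have h13 : Θ (swap 2 3) = Θ (swap 0 1) := Units.ext (h3.trans h1.symm)
    rw [MonoidHom.mem_ker, map_mul, h13, ← map_mul, swap_mul_self, map_one]
  have hy : swap 0 2 * swap 1 3 ∈ Θ.ker := by
    have hconj : swap (0 : Fin 4) 2 * swap 1 3
        = swap 1 2 * (swap 0 1 * swap 2 3) * (swap 1 2)⁻¹ := by
      decide
    exact hconj ▸ Θ.normal_ker.conj_mem _ hx _
  have h2_dvd : 2 ∣ Nat.card Θ.range :=
    Θ.prime_dvd_natCard_range (swap_mul_self 0 1)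
      (Matrix.GeneralLinearGroup.ne_one_of_apply_self_ne_one (i := 0) (by rw [h1]; decide))
  have h3_dvd : 3 ∣ Nat.card Θ.range :=
    Θ.prime_dvd_natCard_range (g := swap 0 1 * swap 1 2) (by decide)
      (Matrix.GeneralLinearGroup.ne_one_of_apply_self_ne_one (i := 0)
        (by rw [map_mul, Units.val_mul, h1, h2]; decide))
  have h6_dvd : Nat.card Θ.ker * 6 ∣ Nat.card (Perm (Fin 4)) :=
    Θ.natCard_ker_mul_dvd_of_dvd_natCard_range
      (Nat.Coprime.mul_dvd_of_dvd_of_dvd (by norm_num) h2_dvd h3_dvd)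
  rw [Nat.card_perm, Nat.card_fin, show Nat.factorial 4 = 4 * 6 from rfl] at h6_dvd
  exact Perm.eq_kleinFour_of_natCard_le hx hy
    (Nat.le_of_dvd (by norm_num) (Nat.dvd_of_mul_dvd_mul_right (by norm_num) h6_dvd))
end

section
/- Let X be a set and F: X⁴ → ℝ satisfy the cyclic relation F(x₁,x₂,x₃,x₄) + F(x₂,x₃,x₁,x₄) + F(x₃,x₁,x₂,x₄) = 0, skew-symmetry in the first two and last two variables, and the coboundary relation in the first two variables: F(x₁,x₂,x₃,x₄) = F(x₁,w,x₃,x₄) + F(w,x₂,x₃,x₄). Then F also satisfies the coboundary relation in its last two variables: F(x₁,x₂,x₃,x₄) = F(x₁,x₂,x₃,w) + F(x₁,x₂,w,x₄) for all w ∈ X. -/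
set_option maxRecDepth 4000


theorem stmt9 {X : Type*} (F : X → X → X → X → ℝ)
    (hcyc : ∀ x₁ x₂ x₃ x₄,
      F x₁ x₂ x₃ x₄ + F x₂ x₃ x₁ x₄ + F x₃ x₁ x₂ x₄ = 0)
    (hskew1 : ∀ x₁ x₂ x₃ x₄, F x₂ x₁ x₃ x₄ = -F x₁ x₂ x₃ x₄)
    (hskew2 : ∀ x₁ x₂ x₃ x₄, F x₁ x₂ x₄ x₃ = -F x₁ x₂ x₃ x₄)
    (hcob : ∀ x₁ x₂ x₃ x₄ w, F x₁ x₂ x₃ x₄ = F x₁ w x₃ x₄ + F w x₂ x₃ x₄) :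
    ∀ x₁ x₂ x₃ x₄ w, F x₁ x₂ x₃ x₄ = F x₁ x₂ x₃ w + F x₁ x₂ w x₄ := by
  intro x₁ x₂ x₃ x₄ w
  have c0 := hcyc x₁ x₂ x₃ x₄
  have c1 := hcyc x₁ x₂ x₃ w
  have c2 := hcyc x₁ x₂ x₄ x₃
  have c3 := hcyc x₁ x₂ x₄ w
  have c4 := hcyc x₁ x₂ w x₃
  have c5 := hcyc x₁ x₂ w x₄
  have c6 := hcyc x₁ x₃ x₄ x₁
  have c7 := hcyc x₁ x₃ x₄ x₂
  have c8 := hcyc x₁ x₃ w x₁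
  have c9 := hcyc x₁ x₃ w x₂
  have c10 := hcyc x₁ x₄ w x₁
  have c11 := hcyc x₁ x₄ w x₂
  have c12 := hcyc x₂ x₃ x₄ x₁
  have c13 := hcyc x₂ x₃ w x₁
  have c14 := hcyc x₂ x₄ w x₁
  have b0 := hcob x₁ x₂ x₁ x₃ x₄
  have b1 := hcob x₁ x₂ x₁ x₃ w
  have b2 := hcob x₁ x₂ x₁ x₄ x₃
  have b3 := hcob x₁ x₂ x₁ x₄ w
  have b4 := hcob x₁ x₂ x₁ w x₃
  have b5 := hcob x₁ x₂ x₁ w x₄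
  have s0 := hskew2 x₁ x₂ x₁ x₃
  have s1 := hskew2 x₂ x₁ x₁ x₃
  have s2 := hskew1 x₁ x₂ x₁ x₃
  have s3 := hskew1 x₁ x₂ x₃ x₁
  have s4 := hskew2 x₁ x₂ x₁ x₄
  have s5 := hskew2 x₂ x₁ x₁ x₄
  have s6 := hskew1 x₁ x₂ x₁ x₄
  have s7 := hskew1 x₁ x₂ x₄ x₁
  have s8 := hskew2 x₁ x₂ x₁ w
  have s9 := hskew2 x₂ x₁ x₁ w
  have s10 := hskew1 x₁ x₂ x₁ w
  have s11 := hskew1 x₁ x₂ w x₁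
  have s12 := hskew2 x₁ x₂ x₃ x₄
  have s13 := hskew2 x₂ x₁ x₃ x₄
  have s14 := hskew1 x₁ x₂ x₃ x₄
  have s15 := hskew1 x₁ x₂ x₄ x₃
  have s16 := hskew2 x₁ x₂ x₃ w
  have s17 := hskew2 x₂ x₁ x₃ w
  have s18 := hskew1 x₁ x₂ x₃ w
  have s19 := hskew1 x₁ x₂ w x₃
  have s20 := hskew2 x₁ x₂ x₄ w
  have s21 := hskew2 x₂ x₁ x₄ w
  have s22 := hskew1 x₁ x₂ x₄ w
  have s23 := hskew1 x₁ x₂ w x₄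
  have s24 := hskew2 x₁ x₃ x₁ x₄
  have s25 := hskew2 x₃ x₁ x₁ x₄
  have s26 := hskew1 x₁ x₃ x₁ x₄
  have s27 := hskew1 x₁ x₃ x₄ x₁
  have s28 := hskew2 x₁ x₃ x₁ w
  have s29 := hskew2 x₃ x₁ x₁ w
  have s30 := hskew1 x₁ x₃ x₁ w
  have s31 := hskew1 x₁ x₃ w x₁
  have s32 := hskew2 x₁ x₃ x₂ x₄
  have s33 := hskew2 x₃ x₁ x₂ x₄
  have s34 := hskew1 x₁ x₃ x₂ x₄
  have s35 := hskew1 x₁ x₃ x₄ x₂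
  have s36 := hskew2 x₁ x₃ x₂ w
  have s37 := hskew2 x₃ x₁ x₂ w
  have s38 := hskew1 x₁ x₃ x₂ w
  have s39 := hskew1 x₁ x₃ w x₂
  have s40 := hskew2 x₁ x₄ x₁ x₃
  have s41 := hskew2 x₄ x₁ x₁ x₃
  have s42 := hskew1 x₁ x₄ x₁ x₃
  have s43 := hskew1 x₁ x₄ x₃ x₁
  have s44 := hskew2 x₁ x₄ x₁ w
  have s45 := hskew2 x₄ x₁ x₁ w
  have s46 := hskew1 x₁ x₄ x₁ w
  have s47 := hskew1 x₁ x₄ w x₁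
  have s48 := hskew2 x₁ x₄ x₂ w
  have s49 := hskew2 x₄ x₁ x₂ w
  have s50 := hskew1 x₁ x₄ x₂ w
  have s51 := hskew1 x₁ x₄ w x₂
  have s52 := hskew2 x₁ w x₁ x₃
  have s53 := hskew2 w x₁ x₁ x₃
  have s54 := hskew1 x₁ w x₁ x₃
  have s55 := hskew1 x₁ w x₃ x₁
  have s56 := hskew2 x₁ w x₁ x₄
  have s57 := hskew2 w x₁ x₁ x₄
  have s58 := hskew1 x₁ w x₁ x₄
  have s59 := hskew1 x₁ w x₄ x₁
  have s60 := hskew2 x₂ x₃ x₁ x₄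
  have s61 := hskew2 x₃ x₂ x₁ x₄
  have s62 := hskew1 x₂ x₃ x₁ x₄
  have s63 := hskew1 x₂ x₃ x₄ x₁
  have s64 := hskew2 x₂ x₃ x₁ w
  have s65 := hskew2 x₃ x₂ x₁ w
  have s66 := hskew1 x₂ x₃ x₁ w
  have s67 := hskew1 x₂ x₃ w x₁
  have s68 := hskew2 x₂ x₄ x₁ x₃
  have s69 := hskew2 x₄ x₂ x₁ x₃
  have s70 := hskew1 x₂ x₄ x₁ x₃
  have s71 := hskew1 x₂ x₄ x₃ x₁
  have s72 := hskew2 x₂ x₄ x₁ w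
  have s73 := hskew2 x₄ x₂ x₁ w
  have s74 := hskew1 x₂ x₄ x₁ w
  have s75 := hskew1 x₂ x₄ w x₁
  have s76 := hskew2 x₂ w x₁ x₃
  have s77 := hskew2 w x₂ x₁ x₃
  have s78 := hskew1 x₂ w x₁ x₃
  have s79 := hskew1 x₂ w x₃ x₁
  have s80 := hskew2 x₂ w x₁ x₄
  have s81 := hskew2 w x₂ x₁ x₄
  have s82 := hskew1 x₂ w x₁ x₄
  have s83 := hskew1 x₂ w x₄ x₁
  have s84 := hskew2 x₃ x₄ x₁ x₁
  have s85 := hskew2 x₄ x₃ x₁ x₁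
  have s86 := hskew1 x₃ x₄ x₁ x₁
  have s87 := hskew1 x₃ x₄ x₁ x₁
  have s88 := hskew2 x₃ x₄ x₁ x₂
  have s89 := hskew2 x₄ x₃ x₁ x₂
  have s90 := hskew1 x₃ x₄ x₁ x₂
  have s91 := hskew1 x₃ x₄ x₂ x₁
  have s92 := hskew2 x₃ w x₁ x₁
  have s93 := hskew2 w x₃ x₁ x₁
  have s94 := hskew1 x₃ w x₁ x₁
  have s95 := hskew1 x₃ w x₁ x₁
  have s96 := hskew2 x₃ w x₁ x₂
  have s97 := hskew2 w x₃ x₁ x₂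
  have s98 := hskew1 x₃ w x₁ x₂
  have s99 := hskew1 x₃ w x₂ x₁
  have s100 := hskew2 x₁ x₄ x₂ x₃
  have s101 := hskew2 x₄ x₁ x₂ x₃
  have s102 := hskew1 x₁ x₄ x₂ x₃
  have s103 := hskew1 x₁ x₄ x₃ x₂
  have s104 := hskew2 x₄ w x₁ x₁
  have s105 := hskew2 w x₄ x₁ x₁
  have s106 := hskew1 x₄ w x₁ x₁
  have s107 := hskew1 x₄ w x₁ x₁
  have s108 := hskew2 x₄ w x₁ x₂
  have s109 := hskew2 w x₄ x₁ x₂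
  have s110 := hskew1 x₄ w x₁ x₂
  have s111 := hskew1 x₄ w x₂ x₁
  have s112 := hskew2 x₁ w x₂ x₃
  have s113 := hskew2 w x₁ x₂ x₃
  have s114 := hskew1 x₁ w x₂ x₃
  have s115 := hskew1 x₁ w x₃ x₂
  have s116 := hskew2 x₁ w x₂ x₄
  have s117 := hskew2 w x₁ x₂ x₄
  have s118 := hskew1 x₁ w x₂ x₄
  have s119 := hskew1 x₁ w x₄ x₂
  linarith
end
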